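/- arXiv:1512.08763 — 8 statements merged into one kernel-verified Lean document; each statement's English description precedes it below -/
import Mathlib

section
/- Let D ≥ 2 and ρ ∈ ℝ^D with ρ_D ≠ 0. Let ξ : ℝ × 𝕋^D × ℝ → ℝ be continuous and satisfy ξ(0,θ,x) = x and the cocycle property ξ(t+τ, θ, x) = ξ(t, θ + τρ, ξ(τ,θ,x)) for all t, τ ∈ ℝ, θ ∈ 𝕋^D, x ∈ ℝ. Write ι : 𝕋^{D-1} → 𝕋^D, ι(θ) = (θ, 0), and ω = (ρ₁/ρ_D, …, ρ_{D-1}/ρ_D) mod ℤ^{D-1}. Suppose φ̃ : 𝕋^{D-1} → ℝ is invariant under the first return map, i.e. ξ(1/ρ_D, ι(θ), φ̃(θ)) = φ̃(θ + ω) for all θ ∈ 𝕋^{D-1}. Then there exists a unique φ : 𝕋^D → ℝ such that ξ(t, θ, φ(θ)) = φ(θ + tρ) for all t ∈ ℝ and θ ∈ 𝕋^D and such that φ(ι(θ)) = φ̃(θ) for all θ ∈ 𝕋^{D-1}; moreover, φ is continuous if and only if φ̃ is continuous. -/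
/-!
Every point of `𝕋^D` has the form `ι β + sρ`, and two such representations `(s, β)`, `(s', β')`
differ by an integer multiple of `(1 / ρ_D, -ω)`. Invariance forces
`φ (ι β + sρ) = ξ(s, ι β, φ̃ β)`, and the right-hand side is well defined because invariance of
`φ̃` under the first return map makes `(s, β) ↦ ξ(s, ι β, φ̃ β)` periodic with the same period.
Continuity passes through the quotient map `ℝ × 𝕋^(D-1) → 𝕋^D`, `(s, β) ↦ ι β + sρ`.
-/

open Function Topology

section Suspension

variable {X B Y : Type*} [TopologicalSpace X]

structure IsCocycle (ϕ : Flow ℝ X) (ξ : ℝ → X → Y → Y) : Prop where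
  map_zero : ∀ x y, ξ 0 x y = y
  map_add : ∀ t τ x y, ξ (t + τ) x y = ξ t (ϕ τ x) (ξ τ x y)

def IsInvariantGraph (ϕ : Flow ℝ X) (ξ : ℝ → X → Y → Y) (φ : X → Y) : Prop :=
  ∀ t x, ξ t x (φ x) = φ (ϕ t x)

def suspensionMap (ϕ : Flow ℝ X) (ι : B → X) (z : ℝ × B) : X :=
  ϕ z.1 (ι z.2)

def sweptGraph (ξ : ℝ → X → Y → Y) (ι : B → X) (φt : B → Y) (z : ℝ × B) : Y :=
  ξ z.1 (ι z.2) (φt z.2)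

variable {ϕ : Flow ℝ X} {ι : B → X} {ξ : ℝ → X → Y → Y} {φt : B → Y}

theorem Flow.map_neg_map {τ : Type*} [TopologicalSpace τ] [AddGroup τ] [IsTopologicalAddGroup τ]
    (ϕ : Flow τ X) (s : τ) (x : X) : ϕ (-s) (ϕ s x) = x := by
  rw [← Flow.map_add, neg_add_cancel, Flow.map_zero_apply]

theorem IsInvariantGraph.comp_suspensionMap {ψ : X → Y} (hψ : IsInvariantGraph ϕ ξ ψ)
    (hψι : ∀ b, ψ (ι b) = φt b) : ψ ∘ suspensionMap ϕ ι = sweptGraph ξ ι φt := by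
  ext ⟨s, b⟩
  rw [comp_apply, suspensionMap, sweptGraph, ← hψι, hψ]

theorem continuous_sweptGraph [TopologicalSpace B] [TopologicalSpace Y]
    (hcont : Continuous fun p : ℝ × X × Y => ξ p.1 p.2.1 p.2.2) (hι : Continuous ι)
    (hφt : Continuous φt) : Continuous (sweptGraph ξ ι φt) :=
  hcont.comp (continuous_fst.prodMk ((hι.comp continuous_snd).prodMk (hφt.comp continuous_snd)))

variable [AddCommGroup B] {T : ℝ} {ω : B}

structure IsCrossSection (ϕ : Flow ℝ X) (ι : B → X) (T : ℝ) (ω : B) : Prop where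
  injective : Injective ι
  flow_returnTime : ∀ b, ϕ T (ι b) = ι (b + ω)
  exists_int_of_flow_eq : ∀ t b b', ϕ t (ι b) = ι b' → ∃ k : ℤ, t = k * T
  surjective : Surjective (suspensionMap ϕ ι)

theorem periodic_suspensionMap (hT : ∀ b, ϕ T (ι b) = ι (b + ω)) :
    Periodic (suspensionMap ϕ ι) (T, -ω) := by
  rintro ⟨s, b⟩
  simp [suspensionMap, Flow.map_add, hT]

theorem IsCocycle.periodic_sweptGraph (hξ : IsCocycle ϕ ξ) (hT : ∀ b, ϕ T (ι b) = ι (b + ω))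
    (hφt : ∀ b, ξ T (ι b) (φt b) = φt (b + ω)) : Periodic (sweptGraph ξ ι φt) (T, -ω) := by
  rintro ⟨s, b⟩
  simp only [sweptGraph, Prod.mk_add_mk, hξ.map_add, hT, hφt, neg_add_cancel_right]

theorem IsCrossSection.exists_eq_add_zsmul (h : IsCrossSection ϕ ι T ω) {z z' : ℝ × B}
    (hzz' : suspensionMap ϕ ι z = suspensionMap ϕ ι z') : ∃ k : ℤ, z' = z + k • (T, -ω) := by
  obtain ⟨s, b⟩ := z
  obtain ⟨s', b'⟩ := z'
  obtain ⟨k, hk⟩ : ∃ k : ℤ, -s + s' = k * T := by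
    refine h.exists_int_of_flow_eq _ b' b ?_
    rw [Flow.map_add, ← show ϕ s (ι b) = ϕ s' (ι b') from hzz', ϕ.map_neg_map]
  have hs' : s' = s + k * T := by linarith
  have hb : ι b = ι (b' + k • ω) := by
    have := (periodic_suspensionMap h.flow_returnTime).zsmul k (s, b' + k • ω)
    simp only [suspensionMap, Prod.smul_mk, Prod.mk_add_mk, zsmul_eq_mul, smul_neg,
      add_neg_cancel_right] at this hzz'
    rw [← ϕ.map_neg_map s (ι b), hzz', hs', this, ϕ.map_neg_map]
  refine ⟨k, ?_⟩
  rw [h.injective hb]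
  simp [hs', zsmul_eq_mul]

/-- `invFun` picks an arbitrary preimage; on a cross-section the choice does not matter, since
`sweptGraph` is invariant under the period `(T, -ω)` generating the fibres of `suspensionMap`. -/
noncomputable def graphExtension (ϕ : Flow ℝ X) (ι : B → X) (ξ : ℝ → X → Y → Y)
    (φt : B → Y) : X → Y :=
  sweptGraph ξ ι φt ∘ invFun (suspensionMap ϕ ι)

namespace IsCrossSection

variable (h : IsCrossSection ϕ ι T ω) (hξ : IsCocycle ϕ ξ)
  (hφt : ∀ b, ξ T (ι b) (φt b) = φt (b + ω))
include h hξ hφt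

theorem graphExtension_comp_suspensionMap :
    graphExtension ϕ ι ξ φt ∘ suspensionMap ϕ ι = sweptGraph ξ ι φt := by
  ext z
  obtain ⟨k, hk⟩ := h.exists_eq_add_zsmul (invFun_eq (h.surjective (suspensionMap ϕ ι z)))
  exact ((hξ.periodic_sweptGraph h.flow_returnTime hφt).zsmul k _).symm.trans (congrArg _ hk.symm)

theorem graphExtension_suspensionMap (z : ℝ × B) :
    graphExtension ϕ ι ξ φt (suspensionMap ϕ ι z) = sweptGraph ξ ι φt z :=
  congrFun (h.graphExtension_comp_suspensionMap hξ hφt) z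

theorem graphExtension_apply (b : B) : graphExtension ϕ ι ξ φt (ι b) = φt b := by
  simpa [suspensionMap, sweptGraph, hξ.map_zero] using h.graphExtension_suspensionMap hξ hφt (0, b)

theorem isInvariantGraph_graphExtension : IsInvariantGraph ϕ ξ (graphExtension ϕ ι ξ φt) := by
  intro t x
  obtain ⟨⟨s, b⟩, rfl⟩ := h.surjective x
  have hflow : ϕ t (suspensionMap ϕ ι (s, b)) = suspensionMap ϕ ι (t + s, b) :=
    (ϕ.map_add t s (ι b)).symm
  rw [hflow, h.graphExtension_suspensionMap hξ hφt, h.graphExtension_suspensionMap hξ hφt]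
  exact (hξ.map_add t s (ι b) (φt b)).symm

theorem eq_graphExtension {ψ : X → Y} (hψ : IsInvariantGraph ϕ ξ ψ)
    (hψι : ∀ b, ψ (ι b) = φt b) : ψ = graphExtension ϕ ι ξ φt :=
  h.surjective.injective_comp_right <| (hψ.comp_suspensionMap hψι).trans
    (h.graphExtension_comp_suspensionMap hξ hφt).symm

theorem continuous_graphExtension_iff [TopologicalSpace B] [TopologicalSpace Y]
    (hq : IsQuotientMap (suspensionMap ϕ ι)) (hι : Continuous ι)
    (hcont : Continuous fun p : ℝ × X × Y => ξ p.1 p.2.1 p.2.2) :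
    Continuous (graphExtension ϕ ι ξ φt) ↔ Continuous φt := by
  refine ⟨fun hφ => ?_, fun hφt' => ?_⟩
  · simpa [comp_def, h.graphExtension_apply hξ hφt] using hφ.comp hι
  · rw [hq.continuous_iff, h.graphExtension_comp_suspensionMap hξ hφt]
    exact continuous_sweptGraph hcont hι hφt'

end IsCrossSection

end Suspension

section Torus

def torusFlow {n : ℕ} (ρ : Fin n → ℝ) : Flow ℝ (Fin n → AddCircle (1 : ℝ)) where
  toFun t θ i := θ i + ((t * ρ i : ℝ) : AddCircle (1 : ℝ))
  cont' := continuous_pi fun i => (continuous_apply i).comp continuous_snd |>.add <|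
    (AddCircle.continuous_mk' 1).comp (continuous_fst.mul continuous_const)
  map_add' t₁ t₂ θ := by
    ext i
    change θ i + _ = θ i + _ + _
    rw [add_mul, AddCircle.coe_add]
    ac_rfl
  map_zero' θ := by
    ext i
    simp

variable {d : ℕ} {ρ : Fin (d + 1) → ℝ}

noncomputable def sectionCoordinates (ρ : Fin (d + 1) → ℝ) (y : Fin (d + 1) → ℝ) :
    ℝ × (Fin d → AddCircle (1 : ℝ)) :=
  (y (Fin.last d) / ρ (Fin.last d),
    fun i => ((y i.castSucc - y (Fin.last d) / ρ (Fin.last d) * ρ i.castSucc : ℝ) :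
      AddCircle (1 : ℝ)))

theorem suspensionMap_snoc_sectionCoordinates (hρ : ρ (Fin.last d) ≠ 0) (y : Fin (d + 1) → ℝ) :
    suspensionMap (torusFlow ρ) (fun β : Fin d → AddCircle (1 : ℝ) => Fin.snoc β 0)
      (sectionCoordinates ρ y) = fun i => (y i : AddCircle (1 : ℝ)) := by
  ext i
  refine Fin.lastCases ?_ (fun j => ?_) i
  · simp [suspensionMap, sectionCoordinates, torusFlow, div_mul_cancel₀ _ hρ]
  · simp [suspensionMap, sectionCoordinates, torusFlow]

theorem isQuotientMap_suspensionMap_snoc (hρ : ρ (Fin.last d) ≠ 0) :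
    IsQuotientMap (suspensionMap (torusFlow ρ)
      (fun β : Fin d → AddCircle (1 : ℝ) => Fin.snoc β 0)) := by
  have hq : IsQuotientMap fun (y : Fin (d + 1) → ℝ) i => (y i : AddCircle (1 : ℝ)) :=
    (IsOpenQuotientMap.piMap fun _ => QuotientAddGroup.isOpenQuotientMap_mk).isQuotientMap
  refine IsQuotientMap.of_comp (f := sectionCoordinates ρ) ?_ ?_ ?_
  · unfold sectionCoordinates
    fun_prop
  · exact (torusFlow ρ).continuous continuous_fst (by fun_prop)
  · convert hq using 1
    exact funext (suspensionMap_snoc_sectionCoordinates hρ)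

theorem isCrossSection_snoc (hρ : ρ (Fin.last d) ≠ 0) :
    IsCrossSection (torusFlow ρ) (fun β : Fin d → AddCircle (1 : ℝ) => Fin.snoc β 0)
      (1 / ρ (Fin.last d))
      (fun i => ((ρ i.castSucc / ρ (Fin.last d) : ℝ) : AddCircle (1 : ℝ))) where
  injective := Fin.snoc_left_injective (α := fun _ => AddCircle (1 : ℝ)) 0
  flow_returnTime β := by
    ext i
    refine Fin.lastCases ?_ (fun j => ?_) i
    · simp [torusFlow, inv_mul_cancel₀ hρ]
    · simp [torusFlow, div_eq_inv_mul]
  exists_int_of_flow_eq t β β' hββ' := by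
    have hlast := congrFun hββ' (Fin.last d)
    simp only [torusFlow, Fin.snoc_last, zero_add] at hlast
    obtain ⟨k, hk⟩ := (AddCircle.coe_eq_zero_iff 1).mp hlast
    refine ⟨k, ?_⟩
    field_simp
    simpa using hk.symm
  surjective := (isQuotientMap_suspensionMap_snoc hρ).surjective

end Torus

theorem first_return_invariant_graph_extends_general
    (d : ℕ) (ρ : Fin (d + 1) → ℝ) (hρ : ρ (Fin.last d) ≠ 0)
    (ξ : ℝ → (Fin (d + 1) → AddCircle (1:ℝ)) → ℝ → ℝ)
    (hcont : Continuous fun p : ℝ × ((Fin (d + 1) → AddCircle (1:ℝ)) × ℝ) =>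
      ξ p.1 p.2.1 p.2.2)
    (hinit : ∀ θ x, ξ 0 θ x = x)
    (hcocycle : ∀ t τ θ x,
      ξ (t + τ) θ x
        = ξ t (fun i => θ i + ((τ * ρ i : ℝ) : AddCircle (1:ℝ))) (ξ τ θ x))
    (ι : (Fin d → AddCircle (1:ℝ)) → (Fin (d + 1) → AddCircle (1:ℝ)))
    (hι : ∀ θ, ι θ = Fin.snoc θ (0 : AddCircle (1:ℝ)))
    (ω : Fin d → AddCircle (1:ℝ))
    (hω : ∀ i, ω i = ((ρ i.castSucc / ρ (Fin.last d) : ℝ) : AddCircle (1:ℝ)))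
    (φt : (Fin d → AddCircle (1:ℝ)) → ℝ)
    (hφt : ∀ θ, ξ (1 / ρ (Fin.last d)) (ι θ) (φt θ) = φt (fun i => θ i + ω i)) :
    ∃ φ : (Fin (d + 1) → AddCircle (1:ℝ)) → ℝ,
      ((∀ t θ, ξ t θ (φ θ)
          = φ (fun i => θ i + ((t * ρ i : ℝ) : AddCircle (1:ℝ))))
        ∧ (∀ θ, φ (ι θ) = φt θ)
        ∧ (Continuous φ ↔ Continuous φt))
      ∧ ∀ ψ : (Fin (d + 1) → AddCircle (1:ℝ)) → ℝ,
          ((∀ t θ, ξ t θ (ψ θ)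
              = ψ (fun i => θ i + ((t * ρ i : ℝ) : AddCircle (1:ℝ))))
            ∧ (∀ θ, ψ (ι θ) = φt θ)) → ψ = φ := by
  obtain rfl : ι = fun θ => Fin.snoc (α := fun _ => AddCircle (1:ℝ)) θ 0 := funext hι
  obtain rfl : ω = fun i => ((ρ i.castSucc / ρ (Fin.last d) : ℝ) : AddCircle (1:ℝ)) := funext hω
  have hξ : IsCocycle (torusFlow ρ) ξ := ⟨hinit, hcocycle⟩
  have hS := isCrossSection_snoc hρ
  refine ⟨graphExtension (torusFlow ρ) _ ξ φt, ⟨hS.isInvariantGraph_graphExtension hξ hφt,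
    hS.graphExtension_apply hξ hφt, hS.continuous_graphExtension_iff hξ hφt
      (isQuotientMap_suspensionMap_snoc hρ) (by fun_prop) hcont⟩,
    fun ψ hψ => hS.eq_graphExtension hξ hφt hψ.1 hψ.2⟩

/-- Proposition 3.1, existence/uniqueness part:
An invariant graph of the first return map of a quasiperiodically driven skew product
flow extends uniquely to an invariant graph of the flow, continuous iff the original is.
The torus `𝕋^n` is modelled as `Fin n → AddCircle (1:ℝ)`, `D = d + 1` with `d ≥ 1`,
and translation `θ + tρ` acts coordinatewise. -/
theorem first_return_invariant_graph_extends
    (d : ℕ) (hd : 1 ≤ d) (ρ : Fin (d + 1) → ℝ) (hρ : ρ (Fin.last d) ≠ 0)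
    (ξ : ℝ → (Fin (d + 1) → AddCircle (1:ℝ)) → ℝ → ℝ)
    (hcont : Continuous fun p : ℝ × ((Fin (d + 1) → AddCircle (1:ℝ)) × ℝ) =>
      ξ p.1 p.2.1 p.2.2)
    (hinit : ∀ θ x, ξ 0 θ x = x)
    (hcocycle : ∀ t τ θ x,
      ξ (t + τ) θ x
        = ξ t (fun i => θ i + ((τ * ρ i : ℝ) : AddCircle (1:ℝ))) (ξ τ θ x))
    (ι : (Fin d → AddCircle (1:ℝ)) → (Fin (d + 1) → AddCircle (1:ℝ)))
    (hι : ∀ θ, ι θ = Fin.snoc θ (0 : AddCircle (1:ℝ)))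
    (ω : Fin d → AddCircle (1:ℝ))
    (hω : ∀ i, ω i = ((ρ i.castSucc / ρ (Fin.last d) : ℝ) : AddCircle (1:ℝ)))
    (φt : (Fin d → AddCircle (1:ℝ)) → ℝ)
    (hφt : ∀ θ, ξ (1 / ρ (Fin.last d)) (ι θ) (φt θ) = φt (fun i => θ i + ω i)) :
    ∃ φ : (Fin (d + 1) → AddCircle (1:ℝ)) → ℝ,
      ((∀ t θ, ξ t θ (φ θ)
          = φ (fun i => θ i + ((t * ρ i : ℝ) : AddCircle (1:ℝ))))
        ∧ (∀ θ, φ (ι θ) = φt θ)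
        ∧ (Continuous φ ↔ Continuous φt))
      ∧ ∀ ψ : (Fin (d + 1) → AddCircle (1:ℝ)) → ℝ,
          ((∀ t θ, ξ t θ (ψ θ)
              = ψ (fun i => θ i + ((t * ρ i : ℝ) : AddCircle (1:ℝ))))
            ∧ (∀ θ, ψ (ι θ) = φt θ)) → ψ = φ :=
  first_return_invariant_graph_extends_general d ρ hρ ξ hcont hinit hcocycle ι hι ω hω φt hφt
end

section
/- Let D ≥ 2, b > 1, β ∈ [0,1], ρ ∈ ℝ^D, θ ∈ 𝕋^D, T > 0, and let g : 𝕋^D → ℝ be continuous with 0 ≤ g ≤ 1. Suppose ξ : [0,T] → ℝ is differentiable with ξ'(t) = F_β(θ + tρ, ξ(t)) for all t ∈ [0,T] and ξ(0) = x with |x| ≤ 1, and suppose g(θ + sρ) = 0 for all s ∈ [0,T]. Then ξ(t) ≥ x for every t ∈ [0,T]. (Proposition 5.1(b).) -/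
/-!
Off the bump the forcing vanishes and `ξ` solves the autonomous Riccati equation
`ξ' = b (1 - ξ²)`. Both `1 - ξ` and `1 + ξ` then solve linear equations `φ' = c φ`, whose
solutions `φ t = φ 0 · exp (∫₀ᵗ c)` never change sign, so `ξ` stays in `[-1, 1]`. There the
right-hand side `b (1 - ξ²)` is nonnegative and `ξ` is nondecreasing.
-/

/-- The quasiperiodically forced logistic (Riccati) vector field
`F_β(θ,x) = -b x² + b - (β b/(1 - b^{-1/2})) g(θ)`. -/
noncomputable def Fbeta {D : ℕ} (b β : ℝ)
    (g : (Fin D → AddCircle (1:ℝ)) → ℝ)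
    (θ : Fin D → AddCircle (1:ℝ)) (x : ℝ) : ℝ :=
  -b * x ^ 2 + b - (β * b / (1 - (Real.sqrt b)⁻¹)) * g θ

open Set MeasureTheory

theorem hasDerivWithinAt_integral_Icc {c : ℝ → ℝ} {a b t : ℝ} (hc : ContinuousOn c (Icc a b))
    (ht : t ∈ Icc a b) :
    HasDerivWithinAt (fun u => ∫ s in a..u, c s) (c t) (Icc a b) t := by
  have : Fact (t ∈ Icc a b) := ⟨ht⟩
  refine intervalIntegral.integral_hasDerivWithinAt_right ?_
    (hc.stronglyMeasurableAtFilter_nhdsWithin measurableSet_Icc t) (hc t ht)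
  exact (hc.mono (uIcc_subset_Icc (left_mem_Icc.2 (ht.1.trans ht.2)) ht)).intervalIntegrable

section LinearODE

variable {φ c : ℝ → ℝ} {a b : ℝ}

theorem eq_mul_exp_integral_of_hasDerivWithinAt (hc : ContinuousOn c (Icc a b))
    (hφ : ∀ t ∈ Icc a b, HasDerivWithinAt φ (c t * φ t) (Icc a b) t) :
    ∀ t ∈ Icc a b, φ t = φ a * Real.exp (∫ s in a..t, c s) := by
  set C : ℝ → ℝ := fun u => ∫ s in a..u, c s
  have hG : ∀ t ∈ Icc a b,
      HasDerivWithinAt (fun u => φ u * Real.exp (-C u)) 0 (Icc a b) t := fun t ht =>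
    ((hφ t ht).mul (hasDerivWithinAt_integral_Icc hc ht).neg.exp).congr_deriv (by ring)
  have hconst := constant_of_has_deriv_right_zero (fun t ht => (hG t ht).continuousWithinAt)
    fun t ht => (hG t (mem_Icc_of_Ico ht)).mono_of_mem_nhdsWithin (Icc_mem_nhdsGE_of_mem ht)
  intro t ht
  have hCa : C a = 0 := intervalIntegral.integral_same
  calc φ t = φ t * Real.exp (-C t) * Real.exp (C t) := by
        rw [mul_assoc, ← Real.exp_add, neg_add_cancel, Real.exp_zero, mul_one]
    _ = φ a * Real.exp (C t) := by rw [hconst t ht, hCa, neg_zero, Real.exp_zero, mul_one]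

theorem nonneg_of_hasDerivWithinAt_mul_self (hc : ContinuousOn c (Icc a b))
    (hφ : ∀ t ∈ Icc a b, HasDerivWithinAt φ (c t * φ t) (Icc a b) t) (ha : 0 ≤ φ a) :
    ∀ t ∈ Icc a b, 0 ≤ φ t := fun t ht => by
  rw [eq_mul_exp_integral_of_hasDerivWithinAt hc hφ t ht]
  positivity

end LinearODE

section Riccati

variable {ξ : ℝ → ℝ} {k a b : ℝ}

theorem riccati_le_one (hξ : ∀ t ∈ Icc a b, HasDerivWithinAt ξ (k * (1 - ξ t ^ 2)) (Icc a b) t)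
    (ha : ξ a ≤ 1) : ∀ t ∈ Icc a b, ξ t ≤ 1 := by
  have hcont : ContinuousOn ξ (Icc a b) := fun t ht => (hξ t ht).continuousWithinAt
  have hlin : ∀ t ∈ Icc a b,
      HasDerivWithinAt (fun u => 1 - ξ u) (-(k * (1 + ξ t)) * (1 - ξ t)) (Icc a b) t :=
    fun t ht => ((hξ t ht).const_sub 1).congr_deriv (by ring)
  intro t ht
  have := nonneg_of_hasDerivWithinAt_mul_self (by fun_prop) hlin (sub_nonneg.2 ha) t ht
  linarith

theorem neg_one_le_riccati
    (hξ : ∀ t ∈ Icc a b, HasDerivWithinAt ξ (k * (1 - ξ t ^ 2)) (Icc a b) t)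
    (ha : -1 ≤ ξ a) : ∀ t ∈ Icc a b, -1 ≤ ξ t := by
  have hcont : ContinuousOn ξ (Icc a b) := fun t ht => (hξ t ht).continuousWithinAt
  have hlin : ∀ t ∈ Icc a b,
      HasDerivWithinAt (fun u => 1 + ξ u) (k * (1 - ξ t) * (1 + ξ t)) (Icc a b) t :=
    fun t ht => ((hξ t ht).const_add 1).congr_deriv (by ring)
  intro t ht
  have := nonneg_of_hasDerivWithinAt_mul_self (by fun_prop) hlin (by linarith) t ht
  linarith

theorem riccati_monotoneOn
    (hξ : ∀ t ∈ Icc a b, HasDerivWithinAt ξ (k * (1 - ξ t ^ 2)) (Icc a b) t)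
    (hk : 0 ≤ k) (ha : |ξ a| ≤ 1) : MonotoneOn ξ (Icc a b) := by
  obtain ⟨ha₁, ha₂⟩ := abs_le.1 ha
  refine monotoneOn_of_hasDerivWithinAt_nonneg (convex_Icc a b)
    (fun t ht => (hξ t ht).continuousWithinAt)
    (fun t ht => (hξ t (interior_subset ht)).mono interior_subset) fun t ht => ?_
  have h₁ := riccati_le_one hξ ha₂ t (interior_subset ht)
  have h₂ := neg_one_le_riccati hξ ha₁ t (interior_subset ht)
  have : 0 ≤ 1 - ξ t ^ 2 := by nlinarith
  positivity

end Riccati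

theorem driven_logistic_nondecreasing_off_bump_general
    (D : ℕ) (b β : ℝ) (hb : 1 < b)
    (ρ : Fin D → ℝ) (θ : Fin D → AddCircle (1:ℝ)) (T : ℝ)
    (g : (Fin D → AddCircle (1:ℝ)) → ℝ)
    (ξ : ℝ → ℝ) (x : ℝ)
    (hξ : ∀ t ∈ Set.Icc (0:ℝ) T,
      HasDerivWithinAt ξ
        (Fbeta b β g (fun i => θ i + ((t * ρ i : ℝ) : AddCircle (1:ℝ))) (ξ t))
        (Set.Icc (0:ℝ) T) t)
    (hinit : ξ 0 = x) (hx : |x| ≤ 1)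
    (hbump : ∀ s ∈ Set.Icc (0:ℝ) T,
      g (fun i => θ i + ((s * ρ i : ℝ) : AddCircle (1:ℝ))) = 0) :
    ∀ t ∈ Set.Icc (0:ℝ) T, x ≤ ξ t := by
  have hriccati : ∀ t ∈ Icc (0:ℝ) T,
      HasDerivWithinAt ξ (b * (1 - ξ t ^ 2)) (Icc (0:ℝ) T) t := fun t ht => by
    convert hξ t ht using 1
    rw [Fbeta, hbump t ht]
    ring
  intro t ht
  subst hinit
  exact riccati_monotoneOn hriccati (by linarith) hx (left_mem_Icc.2 (ht.1.trans ht.2)) ht ht.1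

/-- Proposition 5.1(b): a solution of the driven logistic equation
starting at `x` with `|x| ≤ 1`, whose base orbit avoids the forcing bump
(`g(θ + sρ) = 0` for all `s ∈ [0,T]`), is nondecreasing relative to `x`. -/
theorem driven_logistic_nondecreasing_off_bump
    (D : ℕ) (hD : 2 ≤ D) (b β : ℝ) (hb : 1 < b) (hβ0 : 0 ≤ β) (hβ1 : β ≤ 1)
    (ρ : Fin D → ℝ) (θ : Fin D → AddCircle (1:ℝ)) (T : ℝ) (hT : 0 < T)
    (g : (Fin D → AddCircle (1:ℝ)) → ℝ) (hg : Continuous g)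
    (hg0 : ∀ ϑ, 0 ≤ g ϑ) (hg1 : ∀ ϑ, g ϑ ≤ 1)
    (ξ : ℝ → ℝ) (x : ℝ)
    (hξ : ∀ t ∈ Set.Icc (0:ℝ) T,
      HasDerivWithinAt ξ
        (Fbeta b β g (fun i => θ i + ((t * ρ i : ℝ) : AddCircle (1:ℝ))) (ξ t))
        (Set.Icc (0:ℝ) T) t)
    (hinit : ξ 0 = x) (hx : |x| ≤ 1)
    (hbump : ∀ s ∈ Set.Icc (0:ℝ) T,
      g (fun i => θ i + ((s * ρ i : ℝ) : AddCircle (1:ℝ))) = 0) :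
    ∀ t ∈ Set.Icc (0:ℝ) T, x ≤ ξ t :=
  driven_logistic_nondecreasing_off_bump_general D b β hb ρ θ T g ξ x hξ hinit hx hbump
end

section
/- For every c ∈ (0, 1/4) and every t₀ ∈ ℝ there exists b₀ > 1 such that for every b ≥ b₀ there exists β ∈ (0,1) with κ := β/(2b^{1/2} - 2) + β - 1 > 0 for which the function y(t) = -√κ · tan( b√κ (t - t₀) + α ), with α = arctan( -(1+c)/√κ ), is well defined on [t₀, t₀ + b^{-1/2}] (i.e. the argument of tan stays in (-π/2, π/2) there), satisfies y(t₀) = 1 + c and y'(t) = -b y(t)² - b κ for all t ∈ [t₀, t₀ + b^{-1/2}], and satisfies y(t₀ + b^{-1/2}) < -1. Moreover, any differentiable ξ : [t₀, t₀ + b^{-1/2}] → ℝ with ξ(t₀) = 1 + c and ξ'(t) ≤ -b ξ(t)² - b κ for all t satisfies ξ(t₀ + b^{-1/2}) < -1. (Key computation in Claim 5.2: for large b the forced Riccati flow can cross from above 1 to below -1 within one passage through the forcing bump.) -/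
/-!
Write `s = √κ`. The substitution `θ = arctan (ξ / s)` turns `ξ' ≤ -b ξ² - b s²` into
`θ' ≤ -b s`, so along any subsolution the angle drops by at least `b s (t₁ - t₀)`, and the
tangent solution drops at exactly this rate. Choosing `s = π / (√b + 1)` makes the total turn
`b s / √b = π - s`: smaller than `arctan ((1 + c) / s) + π / 2`, where the tangent would blow
up, but larger than `arctan ((1 + c) / s) + arctan (1 / s)`, the turn needed to go from `1 + c`
down to `-1`. Both comparisons reduce to `arctan x ≈ x` for small arguments; the second one is
`s < arctan s + arctan (s / (1 + c))` and needs `(1 + c) s² < 1`.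
-/

open Real Set

namespace Real

lemma arctan_lt_self {x : ℝ} (hx : 0 < x) : arctan x < x := by
  simpa only [tan_arctan] using lt_tan (arctan_pos.2 hx) (arctan_lt_pi_div_two x)

lemma div_one_add_sq_le_arctan {x : ℝ} (hx : 0 ≤ x) : x / (1 + x ^ 2) ≤ arctan x :=
  calc x / (1 + x ^ 2) ≤ x / √(1 + x ^ 2) := by
        gcongr
        calc √(1 + x ^ 2) ≤ √((1 + x ^ 2) ^ 2) := sqrt_le_sqrt (by nlinarith)
            _ = 1 + x ^ 2 := sqrt_sq (by positivity)
    _ = sin (arctan x) := (sin_arctan x).symm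
    _ ≤ arctan x := sin_le (arctan_nonneg.2 hx)

lemma pi_div_two_sub_inv_lt_arctan {x : ℝ} (hx : 0 < x) : π / 2 - x⁻¹ < arctan x := by
  have h := arctan_inv_of_pos (inv_pos.2 hx)
  rw [inv_inv] at h
  linarith [arctan_lt_self (inv_pos.2 hx)]

lemma lt_arctan_add_arctan_div {s a : ℝ} (hs : 0 < s) (ha : 1 ≤ a) (has : a * s ^ 2 < 1) :
    s < arctan s + arctan (s / a) := by
  have hsa : 0 < s / a := div_pos hs (by linarith)
  have hden : 0 < 1 + s ^ 2 := by positivity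
  calc s < (s + s / a) / (1 + s ^ 2) := by
        rw [lt_div_iff₀ hden, mul_add, mul_one, add_lt_add_iff_left, lt_div_iff₀ (by linarith)]
        nlinarith
    _ ≤ s / (1 + s ^ 2) + s / a / (1 + (s / a) ^ 2) := by
        rw [add_div]; gcongr; exact div_le_self hs.le ha
    _ ≤ arctan s + arctan (s / a) :=
        add_le_add (div_one_add_sq_le_arctan hs.le) (div_one_add_sq_le_arctan hsa.le)

lemma pi_sub_mem_Ioo_arctan_div_add {s a : ℝ} (hs : 0 < s) (ha : 1 ≤ a) (has : a * s ^ 2 < 1) :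
    π - s ∈ Ioo (arctan (a / s) + arctan (1 / s)) (arctan (a / s) + π / 2) := by
  have hsa : 0 < s / a := div_pos hs (by linarith)
  have h₁ := arctan_inv_of_pos hsa
  rw [inv_div] at h₁
  constructor
  · rw [one_div, h₁, arctan_inv_of_pos hs]
    linarith [lt_arctan_add_arctan_div hs ha has]
  · linarith [arctan_lt_self hsa, div_le_self hs.le ha]

end Real

section Riccati

variable {b κ : ℝ}

theorem antitoneOn_arctan_div_sqrt_add_of_deriv_le {D : Set ℝ} (hD : Convex ℝ D)
    {ξ ξ' : ℝ → ℝ} (hκ : 0 < κ) (hξ : ∀ t ∈ D, HasDerivWithinAt ξ (ξ' t) D t)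
    (hle : ∀ t ∈ D, ξ' t ≤ -b * ξ t ^ 2 - b * κ) :
    AntitoneOn (fun t => arctan (ξ t / √κ) + b * √κ * t) D := by
  have hs : 0 < √κ := sqrt_pos.2 hκ
  have hderiv : ∀ t ∈ D, HasDerivWithinAt (fun t => arctan (ξ t / √κ) + b * √κ * t)
      (1 / (1 + (ξ t / √κ) ^ 2) * (ξ' t / √κ) + b * √κ) D t := fun t ht =>
    (((hξ t ht).div_const √κ).arctan.add
      ((hasDerivAt_id' t).const_mul (b * √κ)).hasDerivWithinAt).congr_deriv (by rw [mul_one])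
  refine antitoneOn_of_hasDerivWithinAt_nonpos hD (fun t ht => (hderiv t ht).continuousWithinAt)
    (fun t ht => (hderiv t (interior_subset ht)).mono interior_subset) fun t ht => ?_
  have hsq : √κ ^ 2 = κ := sq_sqrt hκ.le
  have hpos : 0 < ξ t ^ 2 + κ := by positivity
  have hrate : 1 / (1 + (ξ t / √κ) ^ 2) * (ξ' t / √κ) = √κ * ξ' t / (ξ t ^ 2 + κ) := by
    field_simp
    rw [hsq]; ring
  rw [hrate, ← le_neg_iff_add_nonpos_right, div_le_iff₀ hpos]
  nlinarith [mul_le_mul_of_nonneg_left (hle t (interior_subset ht)) hs.le]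

theorem image_lt_of_deriv_le_riccati {ξ ξ' : ℝ → ℝ} {t₀ t₁ x₁ : ℝ} (hκ : 0 < κ) (ht : t₀ ≤ t₁)
    (hξ : ∀ t ∈ Icc t₀ t₁, HasDerivWithinAt ξ (ξ' t) (Icc t₀ t₁) t)
    (hle : ∀ t ∈ Icc t₀ t₁, ξ' t ≤ -b * ξ t ^ 2 - b * κ)
    (hcross : arctan (ξ t₀ / √κ) - b * √κ * (t₁ - t₀) < arctan (x₁ / √κ)) : ξ t₁ < x₁ := by
  have hmono := antitoneOn_arctan_div_sqrt_add_of_deriv_le (convex_Icc t₀ t₁) hκ hξ hle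
    (left_mem_Icc.2 ht) (right_mem_Icc.2 ht) ht
  have harctan : arctan (ξ t₁ / √κ) < arctan (x₁ / √κ) := by
    simp only at hmono; linarith
  exact (div_lt_div_iff_of_pos_right (sqrt_pos.2 hκ)).1 (arctan_lt_arctan_iff.1 harctan)

theorem hasDerivAt_neg_sqrt_mul_tan {t₀ α t : ℝ} (hκ : 0 ≤ κ)
    (hcos : cos (b * √κ * (t - t₀) + α) ≠ 0) :
    HasDerivAt (fun t => -√κ * tan (b * √κ * (t - t₀) + α))
      (-b * (-√κ * tan (b * √κ * (t - t₀) + α)) ^ 2 - b * κ) t := by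
  have hlin : HasDerivAt (fun t => b * √κ * (t - t₀) + α) (b * √κ) t := by
    simpa using (((hasDerivAt_id t).sub_const t₀).const_mul (b * √κ)).add_const α
  refine (((hasDerivAt_tan hcos).comp t hlin).const_mul (-√κ)).congr_deriv ?_
  rw [one_div, ← inv_one_add_tan_sq hcos, inv_inv]
  linear_combination (-b) * sq_sqrt hκ

lemma add_arctan_neg_div_mem_Ioo {x₀ t₀ t₁ t : ℝ} (hb : 0 ≤ b) (ht : t ∈ Icc t₀ t₁)
    (hblowup : b * √κ * (t₁ - t₀) < arctan (x₀ / √κ) + π / 2) :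
    b * √κ * (t - t₀) + arctan (-x₀ / √κ) ∈ Ioo (-(π / 2)) (π / 2) := by
  rw [neg_div, arctan_neg]
  have : 0 ≤ b * √κ * (t - t₀) := mul_nonneg (by positivity) (sub_nonneg.2 ht.1)
  have : b * √κ * (t - t₀) ≤ b * √κ * (t₁ - t₀) := by gcongr; exact ht.2
  constructor <;> linarith [arctan_lt_pi_div_two (x₀ / √κ)]

end Riccati

lemma exists_div_add_sub_one_eq {r κ : ℝ} (hr : 1 < r) (hκ : -1 < κ) (hκr : κ * (2 * r - 2) < 1) :
    ∃ β, 0 < β ∧ β < 1 ∧ β / (2 * r - 2) + β - 1 = κ := by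
  have h₁ : 0 < 2 * r - 2 := by linarith
  have h₂ : 0 < 2 * r - 1 := by linarith
  have h₃ : 0 < κ + 1 := by linarith
  refine ⟨(κ + 1) * (2 * r - 2) / (2 * r - 1), by positivity, (div_lt_one h₂).2 (by linarith), ?_⟩
  have h₄ : r - 1 ≠ 0 := by linarith
  field_simp
  ring

lemma exists_riccati_rotation {b : ℝ} (hb : 400 ≤ b) :
    ∃ β s, 0 < β ∧ β < 1 ∧ 0 < s ∧ s ^ 2 < 4 / 5 ∧
      β / (2 * √b - 2) + β - 1 = s ^ 2 ∧ b * s * (√b)⁻¹ = π - s := by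
  have hb₀ : b = √b ^ 2 := (sq_sqrt (by linarith)).symm
  set r := √b
  have hr : 20 ≤ r := by nlinarith [sqrt_nonneg b]
  set s := π / (r + 1)
  have hs : 0 < s := by positivity
  have hsr : s * (r + 1) = π := div_mul_cancel₀ π (by linarith)
  have hs_small : s < 0.15 := by rw [div_lt_iff₀ (by linarith)]; linarith [pi_lt_d2]
  obtain ⟨β, hβ0, hβ1, hβκ⟩ := exists_div_add_sub_one_eq (r := r) (κ := s ^ 2) (by linarith)
    (by nlinarith) (by nlinarith [pi_lt_d2])
  refine ⟨β, s, hβ0, hβ1, hs, by nlinarith, hβκ, ?_⟩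
  rw [hb₀]; field_simp; linarith

/-- key computation in Claim 5.2: for large `b` there is `β ∈ (0,1)` with
`κ = β/(2√b - 2) + β - 1 > 0` such that the explicit tangent comparison solution
`y(t) = -√κ tan(b√κ(t - t₀) + α)`, `α = arctan(-(1+c)/√κ)`, is defined on
`[t₀, t₀ + b^{-1/2}]`, starts at `1 + c`, solves `y' = -by² - bκ`, and ends below `-1`;
moreover every differentiable `ξ` with `ξ(t₀) = 1 + c` and `ξ' ≤ -bξ² - bκ` ends below `-1`. -/
theorem riccati_tan_comparison_crossing
    (c t₀ : ℝ) (hc0 : 0 < c) (hc : c < 1 / 4) :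
    ∃ b₀ : ℝ, 1 < b₀ ∧ ∀ b ≥ b₀, ∃ β : ℝ, 0 < β ∧ β < 1 ∧
      let κ : ℝ := β / (2 * Real.sqrt b - 2) + β - 1
      let α : ℝ := Real.arctan (-(1 + c) / Real.sqrt κ)
      let y : ℝ → ℝ := fun t => -Real.sqrt κ * Real.tan (b * Real.sqrt κ * (t - t₀) + α)
      0 < κ
      ∧ (∀ t ∈ Set.Icc t₀ (t₀ + (Real.sqrt b)⁻¹),
          b * Real.sqrt κ * (t - t₀) + α ∈ Set.Ioo (-(Real.pi / 2)) (Real.pi / 2))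
      ∧ y t₀ = 1 + c
      ∧ (∀ t ∈ Set.Icc t₀ (t₀ + (Real.sqrt b)⁻¹),
          HasDerivAt y (-b * (y t) ^ 2 - b * κ) t)
      ∧ y (t₀ + (Real.sqrt b)⁻¹) < -1
      ∧ ∀ ξ ξ' : ℝ → ℝ,
          (∀ t ∈ Set.Icc t₀ (t₀ + (Real.sqrt b)⁻¹),
            HasDerivWithinAt ξ (ξ' t) (Set.Icc t₀ (t₀ + (Real.sqrt b)⁻¹)) t) →
          (∀ t ∈ Set.Icc t₀ (t₀ + (Real.sqrt b)⁻¹),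
            ξ' t ≤ -b * (ξ t) ^ 2 - b * κ) →
          ξ t₀ = 1 + c →
          ξ (t₀ + (Real.sqrt b)⁻¹) < -1 := by
  refine ⟨400, by norm_num, fun b hb => ?_⟩
  obtain ⟨β, s, hβ0, hβ1, hs, hs_sq, hκs, hrot⟩ := exists_riccati_rotation hb
  refine ⟨β, hβ0, hβ1, ?_⟩
  intro κ α y
  replace hκs : κ = s ^ 2 := hκs
  have hκ : 0 < κ := hκs ▸ pow_pos hs 2
  have hsqrt : √κ = s := by rw [hκs, sqrt_sq hs.le]
  have ht : t₀ ≤ t₀ + (√b)⁻¹ := le_add_of_nonneg_right (by positivity)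
  have hturn : b * √κ * (t₀ + (√b)⁻¹ - t₀) = π - s := by rw [add_sub_cancel_left, hsqrt, hrot]
  obtain ⟨hcrossing, hblowup⟩ := pi_sub_mem_Ioo_arctan_div_add hs (by linarith : 1 ≤ 1 + c)
    (by nlinarith)
  rw [← hturn, ← hsqrt] at hcrossing hblowup
  have hrange t (ht : t ∈ Icc t₀ (t₀ + (√b)⁻¹)) :=
    add_arctan_neg_div_mem_Ioo (by linarith) ht hblowup
  have hy₀ : y t₀ = 1 + c := by
    simp only [y, α, sub_self, mul_zero, zero_add, tan_arctan]
    field_simp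
  have hy' t (ht : t ∈ Icc t₀ (t₀ + (√b)⁻¹)) : HasDerivAt y (-b * y t ^ 2 - b * κ) t :=
    hasDerivAt_neg_sqrt_mul_tan hκ.le (cos_pos_of_mem_Ioo (hrange t ht)).ne'
  have hend : arctan ((1 + c) / √κ) - b * √κ * (t₀ + (√b)⁻¹ - t₀) < arctan (-1 / √κ) := by
    rw [neg_div, arctan_neg]; linarith
  refine ⟨hκ, hrange, hy₀, hy', ?_, fun ξ ξ' hξ hle hξ₀ => ?_⟩
  · exact image_lt_of_deriv_le_riccati hκ ht (fun t ht => (hy' t ht).hasDerivWithinAt)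
      (fun _ _ => le_rfl) (by rw [hy₀]; exact hend)
  · exact image_lt_of_deriv_le_riccati hκ ht hξ hle (by rw [hξ₀]; exact hend)
end

section
/- For every c ∈ (0,1) and every ρ_D > 0 there exists b₀ > 0 such that for all b ≥ b₀ the following holds: every differentiable ξ : [0, 1/ρ_D] → ℝ satisfying ξ'(t) = -b ξ(t)² + b for all t ∈ [0, 1/ρ_D] and ξ(0) = -1 + exp(-b/(2ρ_D)) satisfies ξ(1/ρ_D) > 1 - c. (Claim in Section 5: an orbit starting just above the repelling level -1 and not meeting the forcing bump returns above the contracting level 1 - c within one return time; the proof identifies ξ(t) = tanh(b t + artanh(-1 + exp(-b/(2ρ_D)))).) -/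
/-!
The vector field `x ↦ -b x² + b` is locally Lipschitz and a solution on a compact interval stays
in a compact set, so by uniqueness for ODEs the solution is `ξ t = tanh (b t + artanh (ξ 0))`.
Writing `ξ 0 = -1 + ε`, the bounds `1 - tanh y < 2 e^{-2y}` and `e^{2 artanh (-1 + ε)} = ε / (2 - ε)`
give `1 - ξ (1/ρ) < 4 e^{-2b/ρ} / ε = 4 e^{-3b/(2ρ)}` for `ε = e^{-b/(2ρ)}`, and this is at most
`c` as soon as `b ≥ (2ρ/3) log (4/c)`.
-/

open Real Set

namespace Real

theorem hasDerivAt_tanh (x : ℝ) : HasDerivAt tanh (1 - tanh x ^ 2) x := by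
  have h := (hasDerivAt_sinh x).div (hasDerivAt_cosh x) (cosh_pos x).ne'
  rw [show tanh = sinh / cosh from funext tanh_eq_sinh_div_cosh]
  refine h.congr_deriv ?_
  rw [Pi.div_apply]
  field_simp

theorem one_sub_tanh_lt (x : ℝ) : 1 - tanh x < 2 * exp (-(2 * x)) := by
  have h : 1 - tanh x = 2 * exp (-(2 * x)) / (1 + exp (-(2 * x))) := by
    rw [tanh_eq, show -(2 * x) = -x + -x by ring, exp_add, exp_neg]
    field_simp
    ring
  rw [h, div_lt_iff₀ (by positivity)]
  nlinarith [exp_pos (-(2 * x))]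

theorem exp_two_mul_artanh {x : ℝ} (hx : x ∈ Ioo (-1) 1) :
    exp (2 * artanh x) = (1 + x) / (1 - x) := by
  rw [two_mul, exp_add, exp_artanh hx]
  exact mul_self_sqrt (div_nonneg (by linarith [hx.1]) (by linarith [hx.2]))

end Real

theorem eqOn_Icc_of_hasDerivWithinAt_of_locallyLipschitz {E : Type*} [NormedAddCommGroup E]
    [NormedSpace ℝ E] {v : E → E} (hv : LocallyLipschitz v) {f g : ℝ → E} {a b : ℝ}
    (hf : ∀ t ∈ Icc a b, HasDerivWithinAt f (v (f t)) (Icc a b) t)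
    (hg : ∀ t ∈ Icc a b, HasDerivWithinAt g (v (g t)) (Icc a b) t)
    (ha : f a = g a) : EqOn f g (Icc a b) := by
  have hfc : ContinuousOn f (Icc a b) := fun t ht => (hf t ht).continuousWithinAt
  have hgc : ContinuousOn g (Icc a b) := fun t ht => (hg t ht).continuousWithinAt
  set K := f '' Icc a b ∪ g '' Icc a b
  have hK : IsCompact K := (isCompact_Icc.image_of_continuousOn hfc).union
    (isCompact_Icc.image_of_continuousOn hgc)
  obtain ⟨L, hL⟩ := hv.locallyLipschitzOn.exists_lipschitzOnWith_of_compact hK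
  have toIci : ∀ {h : ℝ → E}, (∀ t ∈ Icc a b, HasDerivWithinAt h (v (h t)) (Icc a b) t) →
      ∀ t ∈ Ico a b, HasDerivWithinAt h (v (h t)) (Ici t) t := fun hh t ht =>
    (hh t (Ico_subset_Icc_self ht)).mono_of_mem_nhdsWithin (Icc_mem_nhdsGE_of_mem ht)
  exact ODE_solution_unique_of_mem_Icc_right (v := fun _ => v) (s := fun _ => K)
    (fun _ _ => hL) hfc (toIci hf)
    (fun t ht => Or.inl (mem_image_of_mem f (Ico_subset_Icc_self ht))) hgc (toIci hg)
    (fun t ht => Or.inr (mem_image_of_mem g (Ico_subset_Icc_self ht))) ha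

theorem hasDerivAt_tanh_mul_add (b α t : ℝ) :
    HasDerivAt (fun t => tanh (b * t + α)) (-b * tanh (b * t + α) ^ 2 + b) t := by
  have h : HasDerivAt (fun t => tanh (b * t + α)) ((1 - tanh (b * t + α) ^ 2) * (b * 1)) t :=
    (hasDerivAt_tanh _).comp t (((hasDerivAt_id t).const_mul b).add_const α)
  exact h.congr_deriv (by ring)

theorem eqOn_tanh_of_riccati {ξ : ℝ → ℝ} {b T : ℝ}
    (hξ : ∀ t ∈ Icc 0 T, HasDerivWithinAt ξ (-b * ξ t ^ 2 + b) (Icc 0 T) t)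
    (h0 : ξ 0 ∈ Ioo (-1) 1) :
    EqOn ξ (fun t => tanh (b * t + artanh (ξ 0))) (Icc 0 T) := by
  have hv : LocallyLipschitz fun x : ℝ => -b * x ^ 2 + b :=
    ContDiff.locallyLipschitz (𝕂 := ℝ) (by fun_prop)
  refine eqOn_Icc_of_hasDerivWithinAt_of_locallyLipschitz hv hξ
    (fun t _ => (hasDerivAt_tanh_mul_add b _ t).hasDerivWithinAt) ?_
  simp [tanh_artanh h0]

theorem one_sub_tanh_add_artanh_neg_one_add_lt {ε : ℝ} (hε0 : 0 < ε) (hε2 : ε < 2) (y : ℝ) :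
    1 - tanh (y + artanh (-1 + ε)) < 4 * exp (-(2 * y)) / ε := by
  have hx : -1 + ε ∈ Ioo (-1) 1 := ⟨by linarith, by linarith⟩
  calc 1 - tanh (y + artanh (-1 + ε)) < 2 * exp (-(2 * (y + artanh (-1 + ε)))) :=
        one_sub_tanh_lt _
    _ = 2 * exp (-(2 * y)) * ((2 - ε) / ε) := by
        rw [show -(2 * (y + artanh (-1 + ε))) = -(2 * y) - 2 * artanh (-1 + ε) by ring, exp_sub,
          exp_two_mul_artanh hx, show 1 + (-1 + ε) = ε by ring]
        field_simp
        ring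
    _ < 2 * exp (-(2 * y)) * (2 / ε) := by gcongr; linarith
    _ = 4 * exp (-(2 * y)) / ε := by ring

/-- claim in Section 5: for large `b`, a solution of the unforced
logistic equation `ξ' = -bξ² + b` starting at `-1 + exp(-b/(2ρ_D))` exceeds `1 - c`
at time `1/ρ_D`. -/
theorem unforced_logistic_recovers_above_contracting_level
    (c ρD : ℝ) (hc0 : 0 < c) (hc1 : c < 1) (hρ : 0 < ρD) :
    ∃ b₀ : ℝ, 0 < b₀ ∧ ∀ b ≥ b₀, ∀ ξ : ℝ → ℝ,
      (∀ t ∈ Set.Icc (0:ℝ) (1 / ρD),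
        HasDerivWithinAt ξ (-b * (ξ t) ^ 2 + b) (Set.Icc (0:ℝ) (1 / ρD)) t) →
      ξ 0 = -1 + Real.exp (-b / (2 * ρD)) →
      1 - c < ξ (1 / ρD) := by
  have hlog : 0 < log (4 / c) := log_pos (by rw [lt_div_iff₀ hc0]; linarith)
  refine ⟨2 * ρD / 3 * log (4 / c), by positivity, fun b hb ξ hξ h0 => ?_⟩
  have hb0 : 0 < b := (by positivity : 0 < 2 * ρD / 3 * log (4 / c)).trans_le hb
  set ε := exp (-b / (2 * ρD))
  have hε0 : 0 < ε := exp_pos _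
  have hε1 : ε < 1 := exp_lt_one_iff.mpr (div_neg_of_neg_of_pos (by linarith) (by positivity))
  have hξ0 : ξ 0 ∈ Ioo (-1) 1 := by
    rw [h0]; constructor <;> linarith
  rw [eqOn_tanh_of_riccati hξ hξ0 ⟨by positivity, le_rfl⟩, h0]
  have hsmall : 4 * exp (-(2 * (b * (1 / ρD)))) / ε ≤ c :=
    calc 4 * exp (-(2 * (b * (1 / ρD)))) / ε = 4 * exp (-(3 * b / (2 * ρD))) := by
          rw [mul_div_assoc, ← exp_sub]; congr 2; field_simp; ring
      _ ≤ 4 * exp (-log (4 / c)) := by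
          gcongr; rw [le_div_iff₀ (by positivity)]; linarith
      _ = c := by rw [exp_neg, exp_log (by positivity)]; field_simp
  linarith [one_sub_tanh_add_artanh_neg_one_add_lt hε0 (by linarith) (b * (1 / ρD))]
end

section
/- Let b > 0, c ∈ (0,1), T > 0 and 0 < δ₁ < T. Let a : [0,T] → ℝ be continuous and let ξ, ζ : [0,T] → ℝ be differentiable solutions of the same equation u'(t) = -b u(t)² + b - a(t). Assume ξ(s) ≥ 1 - c and ζ(s) ≥ 1 - c for all s ∈ [0, T - δ₁], and ξ(s) ≥ -2 and ζ(s) ≥ -2 for all s ∈ [0,T]. Then |ξ(T) - ζ(T)| ≤ exp( -2b(1-c)(T - δ₁) + 4bδ₁ ) · |ξ(0) - ζ(0)|. (Two-solution form of the contraction estimate in Proposition 5.3(a): the difference w = ξ - ζ satisfies w' = -b(ξ + ζ)w, whence |w(T)| = |w(0)| exp(-b ∫₀^T (ξ + ζ)).) -/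
/-!
The difference `w = ξ - ζ` of two solutions of `u' = -b u² + b - a` solves the linear equation
`w' = -b (ξ + ζ) w`. Along a linear equation `w' = -q w` with `q ≥ k`, the quantity
`w² e^{2k t}` is nonincreasing, so `|w|` decays at least like `e^{-k t}`. On `[0, T - δ₁]` we
have `b (ξ + ζ) ≥ 2b(1 - c)`, and on `[T - δ₁, T]` only `b (ξ + ζ) ≥ -4b`; composing the two
estimates gives the rate.
-/

open Set Real

theorem HasDerivWithinAt.riccati_sub {b : ℝ} {a ξ ζ : ℝ → ℝ} {s : Set ℝ} {t : ℝ}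
    (hξ : HasDerivWithinAt ξ (-b * ξ t ^ 2 + b - a t) s t)
    (hζ : HasDerivWithinAt ζ (-b * ζ t ^ 2 + b - a t) s t) :
    HasDerivWithinAt (fun x => ξ x - ζ x) (-(b * (ξ t + ζ t)) * (ξ t - ζ t)) s t :=
  (hξ.sub hζ).congr_deriv (by ring)

theorem abs_le_exp_mul_abs_of_hasDerivWithinAt_neg_mul {w q : ℝ → ℝ} {k s t : ℝ} (hst : s ≤ t)
    (hw : ∀ x ∈ Icc s t, HasDerivWithinAt w (-q x * w x) (Icc s t) x)
    (hq : ∀ x ∈ Icc s t, k ≤ q x) :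
    |w t| ≤ exp (-k * (t - s)) * |w s| := by
  set E : ℝ → ℝ := fun x => w x ^ 2 * exp (2 * k * (x - s))
  have hE : ∀ x ∈ Icc s t, HasDerivWithinAt E
      (2 * (k - q x) * w x ^ 2 * exp (2 * k * (x - s))) (Icc s t) x := by
    intro x hx
    have hexp : HasDerivWithinAt (fun y => exp (2 * k * (y - s)))
        (exp (2 * k * (x - s)) * (2 * k)) (Icc s t) x :=
      (((hasDerivWithinAt_id x _).sub_const s).const_mul (2 * k)).exp.congr_deriv
        (by simp only [id]; ring)
    exact (((hw x hx).fun_pow 2).mul hexp).congr_deriv (by ring)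
  have hE_anti : AntitoneOn E (Icc s t) := by
    refine antitoneOn_of_hasDerivWithinAt_nonpos (convex_Icc s t)
      (fun x hx => (hE x hx).continuousWithinAt)
      (fun x hx => (hE x (interior_subset hx)).mono interior_subset) fun x hx => ?_
    have hkq := hq x (interior_subset hx)
    have : 0 ≤ w x ^ 2 * exp (2 * k * (x - s)) := by positivity
    nlinarith
  have hEts : w t ^ 2 * exp (2 * k * (t - s)) ≤ w s ^ 2 := by
    simpa [E] using hE_anti (left_mem_Icc.2 hst) (right_mem_Icc.2 hst) hst
  have hsq : w t ^ 2 ≤ (exp (-k * (t - s)) * |w s|) ^ 2 := by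
    have hsplit : exp (2 * k * (t - s)) * exp (-k * (t - s)) ^ 2 = 1 := by
      rw [← exp_nat_mul, ← exp_add]; norm_num; ring_nf
    calc w t ^ 2 = w t ^ 2 * exp (2 * k * (t - s)) * exp (-k * (t - s)) ^ 2 := by
          rw [mul_assoc, hsplit, mul_one]
      _ ≤ w s ^ 2 * exp (-k * (t - s)) ^ 2 := by gcongr
      _ = (exp (-k * (t - s)) * |w s|) ^ 2 := by rw [mul_pow, sq_abs, mul_comm]
  simpa [abs_of_nonneg (by positivity : 0 ≤ exp (-k * (t - s)) * |w s|)] using sq_le_sq.1 hsq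

theorem riccati_two_solution_contraction_general
    (b c T δ₁ : ℝ) (hb : 0 < b)
    (hδ0 : 0 < δ₁) (hδT : δ₁ < T)
    (a ξ ζ : ℝ → ℝ)
    (hξ : ∀ t ∈ Set.Icc (0:ℝ) T,
      HasDerivWithinAt ξ (-b * (ξ t) ^ 2 + b - a t) (Set.Icc (0:ℝ) T) t)
    (hζ : ∀ t ∈ Set.Icc (0:ℝ) T,
      HasDerivWithinAt ζ (-b * (ζ t) ^ 2 + b - a t) (Set.Icc (0:ℝ) T) t)
    (hξ1 : ∀ s ∈ Set.Icc (0:ℝ) (T - δ₁), 1 - c ≤ ξ s)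
    (hζ1 : ∀ s ∈ Set.Icc (0:ℝ) (T - δ₁), 1 - c ≤ ζ s)
    (hξ2 : ∀ s ∈ Set.Icc (0:ℝ) T, -2 ≤ ξ s)
    (hζ2 : ∀ s ∈ Set.Icc (0:ℝ) T, -2 ≤ ζ s) :
    |ξ T - ζ T| ≤ Real.exp (-2 * b * (1 - c) * (T - δ₁) + 4 * b * δ₁) * |ξ 0 - ζ 0| := by
  have hw : ∀ {s t}, Icc s t ⊆ Icc 0 T → ∀ x ∈ Icc s t, HasDerivWithinAt (fun y => ξ y - ζ y)
      (-(b * (ξ x + ζ x)) * (ξ x - ζ x)) (Icc s t) x := fun hsub x hx =>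
    ((hξ x (hsub hx)).riccati_sub (hζ x (hsub hx))).mono hsub
  have hsub₁ : Icc 0 (T - δ₁) ⊆ Icc 0 T := Icc_subset_Icc le_rfl (by linarith)
  have hsub₂ : Icc (T - δ₁) T ⊆ Icc 0 T := Icc_subset_Icc (by linarith) le_rfl
  have hfirst := abs_le_exp_mul_abs_of_hasDerivWithinAt_neg_mul (k := 2 * b * (1 - c))
    (by linarith) (hw hsub₁) fun x hx => by
      nlinarith [hξ1 x hx, hζ1 x hx]
  have hlast := abs_le_exp_mul_abs_of_hasDerivWithinAt_neg_mul (k := -4 * b)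
    (by linarith) (hw hsub₂) fun x hx => by
      nlinarith [hξ2 x (hsub₂ hx), hζ2 x (hsub₂ hx)]
  rw [show -(2 * b * (1 - c)) * (T - δ₁ - 0) = -2 * b * (1 - c) * (T - δ₁) by ring] at hfirst
  rw [show -(-4 * b) * (T - (T - δ₁)) = 4 * b * δ₁ by ring] at hlast
  calc |ξ T - ζ T| ≤ exp (4 * b * δ₁) * |ξ (T - δ₁) - ζ (T - δ₁)| := hlast
    _ ≤ exp (4 * b * δ₁) * (exp (-2 * b * (1 - c) * (T - δ₁)) * |ξ 0 - ζ 0|) := by gcongr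
    _ = _ := by rw [exp_add]; ring

/-- two-solution form of the contraction estimate, Proposition 5.3(a):
two solutions of the same driven Riccati equation staying above `1 - c` until time
`T - δ₁` and above `-2` throughout contract at rate
`exp(-2b(1-c)(T-δ₁) + 4bδ₁)` over `[0, T]`. -/
theorem riccati_two_solution_contraction
    (b c T δ₁ : ℝ) (hb : 0 < b) (hc0 : 0 < c) (hc1 : c < 1)
    (hT : 0 < T) (hδ0 : 0 < δ₁) (hδT : δ₁ < T)
    (a ξ ζ : ℝ → ℝ) (ha : ContinuousOn a (Set.Icc 0 T))
    (hξ : ∀ t ∈ Set.Icc (0:ℝ) T,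
      HasDerivWithinAt ξ (-b * (ξ t) ^ 2 + b - a t) (Set.Icc (0:ℝ) T) t)
    (hζ : ∀ t ∈ Set.Icc (0:ℝ) T,
      HasDerivWithinAt ζ (-b * (ζ t) ^ 2 + b - a t) (Set.Icc (0:ℝ) T) t)
    (hξ1 : ∀ s ∈ Set.Icc (0:ℝ) (T - δ₁), 1 - c ≤ ξ s)
    (hζ1 : ∀ s ∈ Set.Icc (0:ℝ) (T - δ₁), 1 - c ≤ ζ s)
    (hξ2 : ∀ s ∈ Set.Icc (0:ℝ) T, -2 ≤ ξ s)
    (hζ2 : ∀ s ∈ Set.Icc (0:ℝ) T, -2 ≤ ζ s) :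
    |ξ T - ζ T| ≤ Real.exp (-2 * b * (1 - c) * (T - δ₁) + 4 * b * δ₁) * |ξ 0 - ζ 0| :=
  riccati_two_solution_contraction_general b c T δ₁ hb hδ0 hδT a ξ ζ hξ hζ hξ1 hζ1 hξ2 hζ2
end

section
/- Let b > 0, ρ_D > 0 and set ε = exp(-b/(2ρ_D)) and T = 1/ρ_D. Let a : [0,T] → ℝ be continuous and let ξ, ζ : [0,T] → ℝ be differentiable solutions of the same equation u'(t) = -b u(t)² + b - a(t). Assume ξ(s) ∈ [-1, -1 + ε] and ζ(s) ∈ [-1, -1 + ε] for all s ∈ [0,T]. Then |ξ(T) - ζ(T)| ≥ exp( 2b(1 - ε)/ρ_D ) · |ξ(0) - ζ(0)|. (Two-solution form of the expansion estimate in Proposition 5.3(b): orbits remaining in the interval of expansion E = [-1, -1 + exp(-b/(2ρ_D))] over one return time separate at rate at least exp(2b(1 - exp(-b/(2ρ_D)))/ρ_D).) -/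
/-! The difference `w = ξ - ζ` of two solutions solves the linear equation
`w' = -b (ξ + ζ) w`, and inside `E` the coefficient `-b (ξ + ζ)` is at least
`K = 2b(1 - ε)`. Hence `exp (-2Kt) w(t)²` is nondecreasing, which gives
`|w(T)| ≥ exp (KT) |w(0)|`. -/

open Set

theorem hasDerivWithinAt_sub_of_riccati {b : ℝ} {f ξ ζ : ℝ → ℝ} {s : Set ℝ} {t : ℝ}
    (hξ : HasDerivWithinAt ξ (-b * ξ t ^ 2 + f t) s t)
    (hζ : HasDerivWithinAt ζ (-b * ζ t ^ 2 + f t) s t) :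
    HasDerivWithinAt (fun s => ξ s - ζ s) (-b * (ξ t + ζ t) * (ξ t - ζ t)) s t :=
  (hξ.sub hζ).congr_deriv (by ring)

theorem monotoneOn_exp_mul_sq_of_hasDerivWithinAt {w c : ℝ → ℝ} {K t₀ t₁ : ℝ}
    (hw : ∀ t ∈ Icc t₀ t₁, HasDerivWithinAt w (c t * w t) (Icc t₀ t₁) t)
    (hc : ∀ t ∈ Ioo t₀ t₁, K ≤ c t) :
    MonotoneOn (fun t => Real.exp (-(2 * K) * t) * w t ^ 2) (Icc t₀ t₁) := by
  have hderiv : ∀ t ∈ Icc t₀ t₁, HasDerivWithinAt (fun t => Real.exp (-(2 * K) * t) * w t ^ 2)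
      (2 * Real.exp (-(2 * K) * t) * w t ^ 2 * (c t - K)) (Icc t₀ t₁) t := fun t ht =>
    ((((hasDerivWithinAt_id t _).const_mul _).exp).mul ((hw t ht).pow 2)).congr_deriv
      (by simp only [id, Pi.pow_apply, Nat.cast_ofNat]; ring)
  refine monotoneOn_of_hasDerivWithinAt_nonneg (convex_Icc t₀ t₁)
    (f' := fun t => 2 * Real.exp (-(2 * K) * t) * w t ^ 2 * (c t - K))
    (fun t ht => (hderiv t ht).continuousWithinAt) (fun t ht => ?_) (fun t ht => ?_)
  all_goals rw [interior_Icc] at ht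
  · rw [interior_Icc]
    exact (hderiv t (Ioo_subset_Icc_self ht)).mono Ioo_subset_Icc_self
  · have := sub_nonneg.2 (hc t ht)
    positivity

theorem exp_mul_abs_le_abs_of_hasDerivWithinAt {w c : ℝ → ℝ} {K t₀ t₁ : ℝ} (h : t₀ ≤ t₁)
    (hw : ∀ t ∈ Icc t₀ t₁, HasDerivWithinAt w (c t * w t) (Icc t₀ t₁) t)
    (hc : ∀ t ∈ Ioo t₀ t₁, K ≤ c t) :
    Real.exp (K * (t₁ - t₀)) * |w t₀| ≤ |w t₁| := by
  have hψ := monotoneOn_exp_mul_sq_of_hasDerivWithinAt hw hc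
    (left_mem_Icc.2 h) (right_mem_Icc.2 h) h
  have hsq : (Real.exp (K * (t₁ - t₀)) * |w t₀|) ^ 2 ≤ |w t₁| ^ 2 := by
    calc (Real.exp (K * (t₁ - t₀)) * |w t₀|) ^ 2
        = Real.exp (2 * K * t₁) * (Real.exp (-(2 * K) * t₀) * w t₀ ^ 2) := by
          rw [mul_pow, sq_abs, ← Real.exp_nat_mul, mul_assoc, ← mul_assoc _ (Real.exp _),
            ← Real.exp_add]
          ring_nf
      _ ≤ Real.exp (2 * K * t₁) * (Real.exp (-(2 * K) * t₁) * w t₁ ^ 2) := by gcongr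
      _ = |w t₁| ^ 2 := by
          rw [← mul_assoc, ← Real.exp_add, sq_abs]
          ring_nf
          simp
  exact (sq_le_sq₀ (by positivity) (abs_nonneg _)).1 hsq

theorem riccati_two_solution_expansion_general
    (b ρD : ℝ) (hb : 0 < b) (hρ : 0 < ρD)
    (a ξ ζ : ℝ → ℝ)
    (hξ : ∀ t ∈ Set.Icc (0:ℝ) (1 / ρD),
      HasDerivWithinAt ξ (-b * (ξ t) ^ 2 + b - a t) (Set.Icc (0:ℝ) (1 / ρD)) t)
    (hζ : ∀ t ∈ Set.Icc (0:ℝ) (1 / ρD),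
      HasDerivWithinAt ζ (-b * (ζ t) ^ 2 + b - a t) (Set.Icc (0:ℝ) (1 / ρD)) t)
    (hξE : ∀ s ∈ Set.Icc (0:ℝ) (1 / ρD),
      ξ s ∈ Set.Icc (-1 : ℝ) (-1 + Real.exp (-b / (2 * ρD))))
    (hζE : ∀ s ∈ Set.Icc (0:ℝ) (1 / ρD),
      ζ s ∈ Set.Icc (-1 : ℝ) (-1 + Real.exp (-b / (2 * ρD)))) :
    Real.exp (2 * b * (1 - Real.exp (-b / (2 * ρD))) / ρD) * |ξ 0 - ζ 0|
      ≤ |ξ (1 / ρD) - ζ (1 / ρD)| := by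
  set ε := Real.exp (-b / (2 * ρD))
  have hw : ∀ t ∈ Icc (0:ℝ) (1 / ρD), HasDerivWithinAt (fun s => ξ s - ζ s)
      (-b * (ξ t + ζ t) * (ξ t - ζ t)) (Icc 0 (1 / ρD)) t := fun t ht =>
    hasDerivWithinAt_sub_of_riccati (f := fun t => b - a t)
      ((hξ t ht).congr_deriv (by ring)) ((hζ t ht).congr_deriv (by ring))
  have hc : ∀ t ∈ Ioo (0:ℝ) (1 / ρD), 2 * b * (1 - ε) ≤ -b * (ξ t + ζ t) := fun t ht => by
    have := (hξE t (Ioo_subset_Icc_self ht)).2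
    have := (hζE t (Ioo_subset_Icc_self ht)).2
    nlinarith
  have := exp_mul_abs_le_abs_of_hasDerivWithinAt (by positivity) hw hc
  rwa [sub_zero, ← mul_div_assoc, mul_one] at this

/-- two-solution form of the expansion estimate, Proposition 5.3(b):
two solutions of the same driven Riccati equation staying in the interval of expansion
`E = [-1, -1 + exp(-b/(2ρ_D))]` over one return time `T = 1/ρ_D` separate at rate
at least `exp(2b(1 - exp(-b/(2ρ_D)))/ρ_D)`. -/
theorem riccati_two_solution_expansion
    (b ρD : ℝ) (hb : 0 < b) (hρ : 0 < ρD)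
    (a ξ ζ : ℝ → ℝ) (ha : ContinuousOn a (Set.Icc 0 (1 / ρD)))
    (hξ : ∀ t ∈ Set.Icc (0:ℝ) (1 / ρD),
      HasDerivWithinAt ξ (-b * (ξ t) ^ 2 + b - a t) (Set.Icc (0:ℝ) (1 / ρD)) t)
    (hζ : ∀ t ∈ Set.Icc (0:ℝ) (1 / ρD),
      HasDerivWithinAt ζ (-b * (ζ t) ^ 2 + b - a t) (Set.Icc (0:ℝ) (1 / ρD)) t)
    (hξE : ∀ s ∈ Set.Icc (0:ℝ) (1 / ρD),
      ξ s ∈ Set.Icc (-1 : ℝ) (-1 + Real.exp (-b / (2 * ρD))))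
    (hζE : ∀ s ∈ Set.Icc (0:ℝ) (1 / ρD),
      ζ s ∈ Set.Icc (-1 : ℝ) (-1 + Real.exp (-b / (2 * ρD)))) :
    Real.exp (2 * b * (1 - Real.exp (-b / (2 * ρD))) / ρD) * |ξ 0 - ζ 0|
      ≤ |ξ (1 / ρD) - ζ (1 / ρD)| :=
  riccati_two_solution_expansion_general b ρD hb hρ a ξ ζ hξ hζ hξE hζE
end

section
/- Let b > 0, c ∈ (0,1), ρ_D > 0 and set T = 1/ρ_D. Let a : [0,T] → ℝ be continuous and let ξ, ζ : [0,T] → ℝ be differentiable solutions of the same equation u'(t) = -b u(t)² + b - a(t). Assume ξ(s) ∈ [-1, 1 + c) and ζ(s) ∈ [-1, 1 + c) for all s ∈ [0,T], and ξ(0) ≠ ζ(0). Then exp( -2b(1+c)/ρ_D ) · |ξ(0) - ζ(0)| < |ξ(T) - ζ(T)| ≤ exp( 2b/ρ_D ) · |ξ(0) - ζ(0)|. (Two-solution form of Proposition 5.3(c): two-sided bounds exp(-2b(1+c)/ρ_D) < ∂_x ξ̃ ≤ exp(2b/ρ_D) on the derivative of the return map over the section Γ = 𝕋^d × [-1, 1+c].)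 -/
/-!
The difference `w = ξ - ζ` of two solutions of `u' = -b u² + b - a(t)` solves the linear
equation `w' = f w` with `f = -b (ξ + ζ)`, so `w(T) = w(0) · exp (∫₀ᵀ f)`. Both solutions stay in
`[-1, 1 + c)`, hence `-2b(1 + c) < f ≤ 2b`; the lower bound is strict because the continuous `f`
attains its minimum on `[0, T]`. To avoid integrating `f`, compare with exponentials instead:
`w² e^{-2Kt}` has derivative `2 (f - K) w² e^{-2Kt}`, so it is monotone whenever `f - K` has a sign.
-/

open Set Real

section LinearGrowth

variable {f w : ℝ → ℝ} {t₀ t₁ K : ℝ}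

theorem hasDerivWithinAt_sq_mul_exp {D : Set ℝ} {x : ℝ}
    (hw : HasDerivWithinAt w (f x * w x) D x) (K : ℝ) :
    HasDerivWithinAt (fun t => w t ^ 2 * exp (-2 * K * t))
      (2 * (f x - K) * (w x ^ 2 * exp (-2 * K * x))) D x := by
  have hexp : HasDerivWithinAt (fun t => exp (-2 * K * t)) (exp (-2 * K * x) * (-2 * K)) D x :=
    ((hasDerivWithinAt_id x D).const_mul (-2 * K)).exp.congr_deriv (by simp)
  exact ((hw.pow 2).mul hexp).congr_deriv (by simp only [Pi.pow_apply]; push_cast; ring)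

theorem sq_exp_mul_abs_mul_exp (w₀ : ℝ) :
    (exp (K * (t₁ - t₀)) * |w₀|) ^ 2 * exp (-2 * K * t₁) = w₀ ^ 2 * exp (-2 * K * t₀) := by
  have hexp : exp (2 * (K * (t₁ - t₀))) * exp (-2 * K * t₁) = exp (-2 * K * t₀) := by
    rw [← exp_add]; ring_nf
  rw [mul_pow, sq_abs, ← exp_nat_mul]
  push_cast
  linear_combination w₀ ^ 2 * hexp

theorem sq_mul_exp_le_iff (w₀ w₁ : ℝ) :
    w₁ ^ 2 * exp (-2 * K * t₁) ≤ w₀ ^ 2 * exp (-2 * K * t₀) ↔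
      |w₁| ≤ exp (K * (t₁ - t₀)) * |w₀| := by
  rw [← sq_exp_mul_abs_mul_exp (t₁ := t₁) w₀, mul_le_mul_iff_left₀ (exp_pos _), ← sq_abs w₁,
    sq_le_sq₀ (abs_nonneg _) (by positivity)]

theorem le_sq_mul_exp_iff (w₀ w₁ : ℝ) :
    w₀ ^ 2 * exp (-2 * K * t₀) ≤ w₁ ^ 2 * exp (-2 * K * t₁) ↔
      exp (K * (t₁ - t₀)) * |w₀| ≤ |w₁| := by
  rw [← sq_exp_mul_abs_mul_exp (t₁ := t₁) w₀, mul_le_mul_iff_left₀ (exp_pos _), ← sq_abs w₁,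
    sq_le_sq₀ (by positivity) (abs_nonneg _)]

theorem continuousOn_sq_mul_exp
    (hw : ∀ x ∈ Icc t₀ t₁, HasDerivWithinAt w (f x * w x) (Icc t₀ t₁) x) :
    ContinuousOn (fun t => w t ^ 2 * exp (-2 * K * t)) (Icc t₀ t₁) :=
  fun x hx => (hasDerivWithinAt_sq_mul_exp (hw x hx) K).continuousWithinAt

theorem antitoneOn_sq_mul_exp_of_le
    (hw : ∀ x ∈ Icc t₀ t₁, HasDerivWithinAt w (f x * w x) (Icc t₀ t₁) x)
    (hf : ∀ x ∈ Icc t₀ t₁, f x ≤ K) :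
    AntitoneOn (fun t => w t ^ 2 * exp (-2 * K * t)) (Icc t₀ t₁) :=
  antitoneOn_of_hasDerivWithinAt_nonpos (convex_Icc t₀ t₁) (continuousOn_sq_mul_exp hw)
    (fun x hx => (hasDerivWithinAt_sq_mul_exp (hw x (interior_subset hx)) K).mono interior_subset)
    fun x hx => mul_nonpos_of_nonpos_of_nonneg (by linarith [hf x (interior_subset hx)])
      (by positivity)

theorem monotoneOn_sq_mul_exp_of_le
    (hw : ∀ x ∈ Icc t₀ t₁, HasDerivWithinAt w (f x * w x) (Icc t₀ t₁) x)
    (hf : ∀ x ∈ Icc t₀ t₁, K ≤ f x) :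
    MonotoneOn (fun t => w t ^ 2 * exp (-2 * K * t)) (Icc t₀ t₁) :=
  monotoneOn_of_hasDerivWithinAt_nonneg (convex_Icc t₀ t₁) (continuousOn_sq_mul_exp hw)
    (fun x hx => (hasDerivWithinAt_sq_mul_exp (hw x (interior_subset hx)) K).mono interior_subset)
    fun x hx => mul_nonneg (by linarith [hf x (interior_subset hx)]) (by positivity)

theorem abs_le_exp_mul_abs_of_le
    (hw : ∀ x ∈ Icc t₀ t₁, HasDerivWithinAt w (f x * w x) (Icc t₀ t₁) x) (h : t₀ ≤ t₁)
    (hf : ∀ x ∈ Icc t₀ t₁, f x ≤ K) :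
    |w t₁| ≤ exp (K * (t₁ - t₀)) * |w t₀| :=
  (sq_mul_exp_le_iff _ _).1 <|
    antitoneOn_sq_mul_exp_of_le hw hf (left_mem_Icc.2 h) (right_mem_Icc.2 h) h

theorem exp_mul_abs_le_abs_of_le
    (hw : ∀ x ∈ Icc t₀ t₁, HasDerivWithinAt w (f x * w x) (Icc t₀ t₁) x) (h : t₀ ≤ t₁)
    (hf : ∀ x ∈ Icc t₀ t₁, K ≤ f x) :
    exp (K * (t₁ - t₀)) * |w t₀| ≤ |w t₁| :=
  (le_sq_mul_exp_iff _ _).1 <|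
    monotoneOn_sq_mul_exp_of_le hw hf (left_mem_Icc.2 h) (right_mem_Icc.2 h) h

theorem exp_mul_abs_lt_abs_of_lt
    (hw : ∀ x ∈ Icc t₀ t₁, HasDerivWithinAt w (f x * w x) (Icc t₀ t₁) x) (h : t₀ < t₁) (hfc : ContinuousOn f (Icc t₀ t₁))
    (hf : ∀ x ∈ Icc t₀ t₁, K < f x) (hw₀ : w t₀ ≠ 0) :
    exp (K * (t₁ - t₀)) * |w t₀| < |w t₁| := by
  obtain ⟨x₀, hx₀, hmin⟩ := isCompact_Icc.exists_isMinOn (nonempty_Icc.2 h.le) hfc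
  calc exp (K * (t₁ - t₀)) * |w t₀|
      < exp (f x₀ * (t₁ - t₀)) * |w t₀| := by
        gcongr
        exact hf x₀ hx₀
    _ ≤ |w t₁| := exp_mul_abs_le_abs_of_le hw h.le fun x hx => hmin hx

end LinearGrowth

theorem HasDerivWithinAt.sub_of_riccati {ξ ζ : ℝ → ℝ} {D : Set ℝ} {x a b : ℝ}
    (hξ : HasDerivWithinAt ξ (-b * ξ x ^ 2 + b - a) D x)
    (hζ : HasDerivWithinAt ζ (-b * ζ x ^ 2 + b - a) D x) :
    HasDerivWithinAt (fun t => ξ t - ζ t) (-b * (ξ x + ζ x) * (ξ x - ζ x)) D x :=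
  (hξ.sub hζ).congr_deriv (by ring)

theorem riccati_two_solution_two_sided_bounds_general
    (b c ρD : ℝ) (hb : 0 < b) (hρ : 0 < ρD)
    (a ξ ζ : ℝ → ℝ)
    (hξ : ∀ t ∈ Set.Icc (0:ℝ) (1 / ρD),
      HasDerivWithinAt ξ (-b * (ξ t) ^ 2 + b - a t) (Set.Icc (0:ℝ) (1 / ρD)) t)
    (hζ : ∀ t ∈ Set.Icc (0:ℝ) (1 / ρD),
      HasDerivWithinAt ζ (-b * (ζ t) ^ 2 + b - a t) (Set.Icc (0:ℝ) (1 / ρD)) t)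
    (hξΓ : ∀ s ∈ Set.Icc (0:ℝ) (1 / ρD), ξ s ∈ Set.Ico (-1 : ℝ) (1 + c))
    (hζΓ : ∀ s ∈ Set.Icc (0:ℝ) (1 / ρD), ζ s ∈ Set.Ico (-1 : ℝ) (1 + c))
    (hne : ξ 0 ≠ ζ 0) :
    Real.exp (-2 * b * (1 + c) / ρD) * |ξ 0 - ζ 0| < |ξ (1 / ρD) - ζ (1 / ρD)|
      ∧ |ξ (1 / ρD) - ζ (1 / ρD)| ≤ Real.exp (2 * b / ρD) * |ξ 0 - ζ 0| := by
  have hT : (0 : ℝ) < 1 / ρD := by positivity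
  have hdiff := fun t ht => (hξ t ht).sub_of_riccati (hζ t ht)
  have hcont : ContinuousOn (fun t => -b * (ξ t + ζ t)) (Icc 0 (1 / ρD)) :=
    continuousOn_const.mul <|
      fun t ht => ((hξ t ht).continuousWithinAt.add (hζ t ht).continuousWithinAt)
  constructor
  · have hlow := exp_mul_abs_lt_abs_of_lt (K := -2 * b * (1 + c)) hdiff hT hcont
      (fun t ht => by nlinarith [(hξΓ t ht).2, (hζΓ t ht).2]) (sub_ne_zero.2 hne)
    rwa [sub_zero, ← div_eq_mul_one_div] at hlow
  · have hup := abs_le_exp_mul_abs_of_le (K := 2 * b) hdiff hT.le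
      (fun t ht => by nlinarith [(hξΓ t ht).1, (hζΓ t ht).1])
    rwa [sub_zero, ← div_eq_mul_one_div] at hup

/-- two-solution form of Proposition 5.3(c): two distinct solutions of the
same driven Riccati equation staying in `[-1, 1 + c)` over one return time `T = 1/ρ_D`
separate by a factor strictly greater than `exp(-2b(1+c)/ρ_D)` and at most
`exp(2b/ρ_D)`. -/
theorem riccati_two_solution_two_sided_bounds
    (b c ρD : ℝ) (hb : 0 < b) (hc0 : 0 < c) (hc1 : c < 1) (hρ : 0 < ρD)
    (a ξ ζ : ℝ → ℝ) (ha : ContinuousOn a (Set.Icc 0 (1 / ρD)))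
    (hξ : ∀ t ∈ Set.Icc (0:ℝ) (1 / ρD),
      HasDerivWithinAt ξ (-b * (ξ t) ^ 2 + b - a t) (Set.Icc (0:ℝ) (1 / ρD)) t)
    (hζ : ∀ t ∈ Set.Icc (0:ℝ) (1 / ρD),
      HasDerivWithinAt ζ (-b * (ζ t) ^ 2 + b - a t) (Set.Icc (0:ℝ) (1 / ρD)) t)
    (hξΓ : ∀ s ∈ Set.Icc (0:ℝ) (1 / ρD), ξ s ∈ Set.Ico (-1 : ℝ) (1 + c))
    (hζΓ : ∀ s ∈ Set.Icc (0:ℝ) (1 / ρD), ζ s ∈ Set.Ico (-1 : ℝ) (1 + c))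
    (hne : ξ 0 ≠ ζ 0) :
    Real.exp (-2 * b * (1 + c) / ρD) * |ξ 0 - ζ 0| < |ξ (1 / ρD) - ζ (1 / ρD)|
      ∧ |ξ (1 / ρD) - ζ (1 / ρD)| ≤ Real.exp (2 * b / ρD) * |ξ 0 - ζ 0| :=
  riccati_two_solution_two_sided_bounds_general b c ρD hb hρ a ξ ζ hξ hζ hξΓ hζΓ hne
end

section
/- Let ρ_D > 0, δ₁ ∈ (0, 1/(36ρ_D)) and c ∈ (0, 1/4). Then there exists b₀ > 0 such that for all b ≥ b₀ the following holds. Let 0 ≤ t₁ ≤ 1/ρ_D - δ₁, t ∈ [t₁, 1/ρ_D], and let ξ : [0, 1/ρ_D] → ℝ be continuous with ξ(τ) ≥ 1 - c for all τ ∈ [0, 1/ρ_D - δ₁] and ξ(τ) ≥ -2 for all τ ∈ [0, 1/ρ_D]. Then: (i) ∫₀^{t - t₁} exp( -2b ∫_s^{t - t₁} ξ(τ + t₁) dτ ) ds ≤ exp(5 b δ₁); and (ii) if moreover t₁ ≤ 1/ρ_D - 5δ₁, then exp( -2b ∫₀^{t - t₁} ξ(τ + t₁) dτ ) ≤ 1.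 (Claim 5.6, inequalities (eq: upper bound exp int) and (eq: dx xi <= 1), expressed for the function ξ(τ) = ξ_β(τ, θ, x) along an orbit starting in 𝕋^d × C, for which -2b ξ is the x-derivative of the vector field along the orbit.) -/
/-!
After the substitution `τ ↦ τ + t₁` every integral is an integral of `ξ` over a subinterval
`[σ, t]` of `[t₁, t] ⊆ [0, 1/ρ_D]`. On such an interval `ξ ≥ 1 - c ≥ 0` up to time
`1/ρ_D - δ₁` and `ξ ≥ -2` on the remaining piece of length at most `δ₁`, so
`∫_σ^t ξ ≥ -2δ₁`. Hence the integrand of (i) is at most `exp (4bδ₁)` on an interval of length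
at most `1/ρ_D`, and `1/ρ_D ≤ exp (bδ₁)` once `b ≥ 1/(ρ_D δ₁)`. For (ii) the gain
`(1 - c) · 4δ₁ ≥ 3δ₁` on `[t₁, 1/ρ_D - δ₁]` outweighs the possible loss `2δ₁` on the last piece,
so `∫_{t₁}^t ξ ≥ 0`.
-/

open MeasureTheory Set
open scoped Interval

namespace intervalIntegral

variable {f : ℝ → ℝ} {a b w C K m δ : ℝ}

lemma mul_sub_le_integral_of_forall_le (hab : a ≤ b) (hf : IntervalIntegrable f volume a b)
    (h : ∀ τ ∈ Icc a b, C ≤ f τ) : C * (b - a) ≤ ∫ τ in a..b, f τ := by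
  simpa [mul_comm] using integral_mono_on hab intervalIntegrable_const hf h

lemma le_integral_of_forall_le_of_forall_le (haw : a ≤ w) (hwb : w ≤ b)
    (hf : IntervalIntegrable f volume a b) (hm : ∀ τ ∈ Icc a w, m ≤ f τ)
    (hK : ∀ τ ∈ Icc w b, -K ≤ f τ) :
    m * (w - a) - K * (b - w) ≤ ∫ τ in a..b, f τ := by
  have hfaw : IntervalIntegrable f volume a w :=
    hf.mono_set (by rw [uIcc_of_le haw, uIcc_of_le (haw.trans hwb)]; exact Icc_subset_Icc_right hwb)
  have hfwb : IntervalIntegrable f volume w b :=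
    hf.mono_set (by rw [uIcc_of_le hwb, uIcc_of_le (haw.trans hwb)]; exact Icc_subset_Icc_left haw)
  rw [← integral_add_adjacent_intervals hfaw hfwb]
  have := mul_sub_le_integral_of_forall_le haw hfaw hm
  have := mul_sub_le_integral_of_forall_le hwb hfwb hK
  linarith

lemma neg_mul_le_integral_of_nonneg_of_neg_le (hK : 0 ≤ K) (hδ : 0 ≤ δ) (hab : a ≤ b)
    (hbw : b ≤ w + δ) (hf : IntervalIntegrable f volume a b)
    (hnonneg : ∀ τ ∈ Icc a b, τ ≤ w → 0 ≤ f τ) (hlow : ∀ τ ∈ Icc a b, -K ≤ f τ) :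
    -(K * δ) ≤ ∫ τ in a..b, f τ := by
  rcases le_total w a with hwa | haw
  · have := mul_sub_le_integral_of_forall_le hab hf hlow
    nlinarith
  · have := le_integral_of_forall_le_of_forall_le (le_min haw hab) (min_le_right w b) hf
      (fun τ hτ => hnonneg τ ⟨hτ.1, hτ.2.trans (min_le_right _ _)⟩ (hτ.2.trans (min_le_left _ _)))
      (fun τ hτ => hlow τ ⟨(le_min haw hab).trans hτ.1, hτ.2⟩)
    have : b - min w b ≤ δ := by rcases min_cases w b with ⟨h, _⟩ | ⟨h, _⟩ <;> rw [h] <;> linarith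
    nlinarith

lemma integral_nonneg_of_const_le_of_neg_le (hm : 0 ≤ m) (hK : 0 ≤ K) (haw : a ≤ w) (hab : a ≤ b)
    (hbw : b ≤ w + δ) (hgain : K * δ ≤ m * (w - a)) (hf : IntervalIntegrable f volume a b)
    (hmw : ∀ τ ∈ Icc a b, τ ≤ w → m ≤ f τ) (hlow : ∀ τ ∈ Icc a b, -K ≤ f τ) :
    0 ≤ ∫ τ in a..b, f τ := by
  rcases le_total b w with hb | hb
  · have := mul_sub_le_integral_of_forall_le hab hf fun τ hτ => hmw τ hτ (hτ.2.trans hb)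
    nlinarith
  · have := le_integral_of_forall_le_of_forall_le haw hb hf
      (fun τ hτ => hmw τ ⟨hτ.1, hτ.2.trans hb⟩ hτ.2) (fun τ hτ => hlow τ ⟨haw.trans hτ.1, hτ.2⟩)
    nlinarith

end intervalIntegral

lemma integral_exp_neg_mul_integral_le {f : ℝ → ℝ} {a b B L : ℝ} (hab : a ≤ b) (hB : 0 ≤ B)
    (hlow : ∀ s ∈ Icc a b, -L ≤ ∫ τ in s..b, f τ) :
    ∫ s in a..b, Real.exp (-2 * B * ∫ τ in s..b, f τ) ≤ (b - a) * Real.exp (2 * B * L) := by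
  have hbound : ∀ s ∈ Ι a b, ‖Real.exp (-2 * B * ∫ τ in s..b, f τ)‖ ≤ Real.exp (2 * B * L) := by
    intro s hs
    rw [uIoc_of_le hab] at hs
    rw [Real.norm_eq_abs, abs_of_pos (Real.exp_pos _), Real.exp_le_exp]
    nlinarith [hlow s (Ioc_subset_Icc_self hs)]
  have := intervalIntegral.norm_integral_le_of_norm_le_const hbound
  rw [abs_of_nonneg (sub_nonneg.2 hab)] at this
  exact (Real.le_norm_self _).trans (this.trans_eq (mul_comm _ _))

theorem duhamel_integral_estimates_general
    (ρD δ₁ c : ℝ) (hρ : 0 < ρD) (hδ0 : 0 < δ₁)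
    (hc : c < 1 / 4) :
    ∃ b₀ : ℝ, 0 < b₀ ∧ ∀ b ≥ b₀, ∀ t₁ t : ℝ, ∀ ξ : ℝ → ℝ,
      0 ≤ t₁ → t₁ ≤ 1 / ρD - δ₁ → t ∈ Set.Icc t₁ (1 / ρD) →
      ContinuousOn ξ (Set.Icc 0 (1 / ρD)) →
      (∀ τ ∈ Set.Icc (0:ℝ) (1 / ρD - δ₁), 1 - c ≤ ξ τ) →
      (∀ τ ∈ Set.Icc (0:ℝ) (1 / ρD), -2 ≤ ξ τ) →
      ((∫ s in (0:ℝ)..(t - t₁),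
          Real.exp (-2 * b * ∫ τ in s..(t - t₁), ξ (τ + t₁)))
        ≤ Real.exp (5 * b * δ₁))
      ∧ (t₁ ≤ 1 / ρD - 5 * δ₁ →
          Real.exp (-2 * b * ∫ τ in (0:ℝ)..(t - t₁), ξ (τ + t₁)) ≤ 1) := by
  refine ⟨1 / ρD / δ₁, by positivity, fun b hb t₁ t ξ ht₁ _ ⟨ht₁t, htT⟩ hξ hξc hξ2 => ?_⟩
  have hb0 : 0 ≤ b := (by positivity : (0 : ℝ) ≤ 1 / ρD / δ₁).trans hb
  have hshift : ∀ s, ∫ τ in s..(t - t₁), ξ (τ + t₁) = ∫ τ in (s + t₁)..t, ξ τ := by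
    intro s; simp [intervalIntegral.integral_comp_add_right]
  have hint : ∀ σ ∈ Icc t₁ t, IntervalIntegrable ξ volume σ t := fun σ hσ =>
    (hξ.mono (Icc_subset_Icc (ht₁.trans hσ.1) htT)).intervalIntegrable_of_Icc hσ.2
  have htail : ∀ s ∈ Icc 0 (t - t₁), -(2 * δ₁) ≤ ∫ τ in s..(t - t₁), ξ (τ + t₁) := by
    rintro s ⟨hs0, hst⟩
    rw [hshift]
    exact intervalIntegral.neg_mul_le_integral_of_nonneg_of_neg_le (w := 1 / ρD - δ₁) zero_le_two hδ0.le
      (by linarith) (by linarith) (hint _ ⟨by linarith, by linarith⟩)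
      (fun τ hτ hτw => by linarith [hξc τ ⟨by linarith [hτ.1], hτw⟩])
      (fun τ hτ => hξ2 τ ⟨by linarith [hτ.1], hτ.2.trans htT⟩)
  have hT : t - t₁ ≤ Real.exp (b * δ₁) := by
    have : 1 / ρD ≤ b * δ₁ := by rwa [ge_iff_le, div_le_iff₀ hδ0] at hb
    linarith [Real.add_one_le_exp (b * δ₁)]
  refine ⟨?_, fun ht₁5 => ?_⟩
  · calc _ ≤ (t - t₁ - 0) * Real.exp (2 * b * (2 * δ₁)) :=
          integral_exp_neg_mul_integral_le (by linarith) hb0 htail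
      _ ≤ Real.exp (b * δ₁) * Real.exp (4 * b * δ₁) := by
          rw [sub_zero, show 2 * b * (2 * δ₁) = 4 * b * δ₁ by ring]; gcongr
      _ = Real.exp (5 * b * δ₁) := by rw [← Real.exp_add]; ring_nf
  · have hnonneg : 0 ≤ ∫ τ in (0:ℝ)..(t - t₁), ξ (τ + t₁) := by
      rw [hshift, zero_add]
      exact intervalIntegral.integral_nonneg_of_const_le_of_neg_le (m := 1 - c) (K := 2) (w := 1 / ρD - δ₁) (δ := δ₁)
        (by linarith) zero_le_two (by linarith) ht₁t (by linarith) (by nlinarith)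
        (hint _ ⟨le_rfl, ht₁t⟩)
        (fun τ hτ hτw => hξc τ ⟨ht₁.trans hτ.1, hτw⟩)
        (fun τ hτ => hξ2 τ ⟨ht₁.trans hτ.1, hτ.2.trans htT⟩)
    rw [Real.exp_le_one_iff]
    nlinarith

/-- Claim 5.6, inequalities (eq: upper bound exp int) and
(eq: dx xi <= 1): Duhamel-type integral estimates along an orbit `ξ` of the driven
Riccati flow starting in the contracting region, for large `b`. -/
theorem duhamel_integral_estimates
    (ρD δ₁ c : ℝ) (hρ : 0 < ρD) (hδ0 : 0 < δ₁) (hδ : δ₁ < 1 / (36 * ρD))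
    (hc0 : 0 < c) (hc : c < 1 / 4) :
    ∃ b₀ : ℝ, 0 < b₀ ∧ ∀ b ≥ b₀, ∀ t₁ t : ℝ, ∀ ξ : ℝ → ℝ,
      0 ≤ t₁ → t₁ ≤ 1 / ρD - δ₁ → t ∈ Set.Icc t₁ (1 / ρD) →
      ContinuousOn ξ (Set.Icc 0 (1 / ρD)) →
      (∀ τ ∈ Set.Icc (0:ℝ) (1 / ρD - δ₁), 1 - c ≤ ξ τ) →
      (∀ τ ∈ Set.Icc (0:ℝ) (1 / ρD), -2 ≤ ξ τ) →
      ((∫ s in (0:ℝ)..(t - t₁),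
          Real.exp (-2 * b * ∫ τ in s..(t - t₁), ξ (τ + t₁)))
        ≤ Real.exp (5 * b * δ₁))
      ∧ (t₁ ≤ 1 / ρD - 5 * δ₁ →
          Real.exp (-2 * b * ∫ τ in (0:ℝ)..(t - t₁), ξ (τ + t₁)) ≤ 1) :=
  duhamel_integral_estimates_general ρD δ₁ c hρ hδ0 hc
end
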